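/- arXiv:1309.1317 — 2 statements merged into one kernel-verified Lean document; each statement's English description precedes it below -/
import Mathlib

section
/- Let n ≥ 9 be an integer, define μ_n^−(ρ) = −1 − (n·ρ^{(n−1)²}·(1 − (1 − 1/n)·ρ^{2n−1}))/(2n−1), and let ν_n* be the unique zero of μ_n^− in [1, +∞). Then ν_n* < 1 + (ln n)/n² − (ln(ln n))/(8n²). -/
/-!
Since `μ_n^−` is continuous and negative at `1`, uniqueness of its zero reduces the claim to
`μ_n^−(B) > 0` for `B = 1 + y/n²`, `y = ln n - ln ln n / 8`, that is, to
`n B^((n-1)²) ((1 - 1/n) B^(2n-1) - 1) > 2n - 1`. For `n ≥ 20`,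
`B^((n-1)²) ≥ e^(y - s) = n (ln n)^(-1/8) e^(-s)` with `s = 2y/n + (y/n)²` small, and Bernoulli's
inequality gives `n ((1 - 1/n) B^(2n-1) - 1) ≳ 2y - 1`; as `(ln n)^(1/8)` grows much more slowly
than `y`, the product exceeds `2n`. For `9 ≤ n < 20` these estimates are too lossy, so the
inequality is checked in exact rational arithmetic at a rational point below `B`, which suffices
because the left-hand side is increasing in `B` wherever it is positive.
-/

/-- The function `μ_n^−` from the analysis of the optimal third order SSP
Runge–Kutta methods with `n²` stages. -/
noncomputable def munMinus (n : ℕ) (ρ : ℝ) : ℝ :=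
  -1 - (n * ρ ^ ((n - 1) ^ 2) * (1 - (1 - 1 / (n : ℝ)) * ρ ^ (2 * n - 1))) / (2 * (n : ℝ) - 1)

open Real

noncomputable def gain (n : ℕ) (ρ : ℝ) : ℝ :=
  n * ρ ^ ((n - 1) ^ 2) * ((1 - 1 / (n : ℝ)) * ρ ^ (2 * n - 1) - 1)

lemma munMinus_eq_gain_div_sub_one (n : ℕ) (ρ : ℝ) :
    munMinus n ρ = gain n ρ / (2 * n - 1) - 1 := by
  rw [munMinus, gain]
  ring

lemma munMinus_pos_iff {n : ℕ} (hn : 1 ≤ n) {ρ : ℝ} :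
    0 < munMinus n ρ ↔ 2 * (n : ℝ) - 1 < gain n ρ := by
  have hn' : (1 : ℝ) ≤ n := by exact_mod_cast hn
  rw [munMinus_eq_gain_div_sub_one, sub_pos, one_lt_div (by linarith)]

lemma munMinus_one_neg {n : ℕ} (hn : 1 ≤ n) : munMinus n 1 < 0 := by
  have hn' : (1 : ℝ) ≤ n := by exact_mod_cast hn
  have hgain : gain n 1 = -1 := by
    simp only [gain, one_pow, mul_one]
    field_simp
    ring
  rw [munMinus_eq_gain_div_sub_one, hgain, sub_neg, div_lt_one (by linarith)]
  linarith

lemma continuous_munMinus (n : ℕ) : Continuous (munMinus n) := by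
  unfold munMinus
  fun_prop

lemma gain_le_gain {n : ℕ} {r ρ : ℝ} (hr : 0 ≤ r) (hrρ : r ≤ ρ) (hpos : 0 < gain n r) :
    gain n r ≤ gain n ρ := by
  have hc : 0 ≤ 1 - 1 / (n : ℝ) := by
    rw [one_div, sub_nonneg]
    exact Nat.cast_inv_le_one n
  have hfactor : 0 < (1 - 1 / (n : ℝ)) * r ^ (2 * n - 1) - 1 :=
    pos_of_mul_pos_right hpos (by positivity)
  unfold gain
  have hρ : 0 ≤ ρ := hr.trans hrρ
  exact mul_le_mul (by gcongr) (by gcongr) hfactor.le (by positivity)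

lemma lt_of_unique_zero_of_nonpos_of_pos {f : ℝ → ℝ} {a b ν : ℝ} (hab : a ≤ b)
    (hf : ContinuousOn f (Set.Icc a b)) (ha : f a ≤ 0) (hb : 0 < f b)
    (huniq : ∀ ρ ∈ Set.Icc a b, f ρ = 0 → ρ = ν) : ν < b := by
  obtain ⟨c, hc, hfc⟩ := intermediate_value_Icc hab hf ⟨ha, hb.le⟩
  obtain rfl := huniq c hc hfc
  exact hc.2.lt_of_ne (by rintro rfl; exact hb.ne' hfc)

lemma log_add_one_sub_div_le_log {a x : ℝ} (ha : 0 < a) (hx : 0 < x) :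
    log a + (1 - a / x) ≤ log x := by
  have h := one_sub_inv_le_log_of_pos (div_pos hx ha)
  rw [inv_div, log_div hx.ne' ha.ne'] at h
  linarith

lemma log_le_log_add_div_sub_one {a x : ℝ} (ha : 0 < a) (hx : 0 < x) :
    log x ≤ log a + (x / a - 1) := by
  have h := log_le_sub_one_of_pos (div_pos hx ha)
  rw [log_div hx.ne' ha.ne'] at h
  linarith

-- `117/40` is just below `43 log 2 / 16 + 17/16`; the slack matters at `n = 9`.
lemma le_log_sub_log_log_div_eight {n : ℕ} (hn : 2 ≤ n) :
    117 / 40 - 15 / (2 * n) ≤ log n - log (log n) / 8 := by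
  have hn' : (2 : ℝ) ≤ n := by exact_mod_cast hn
  have hL : log 8 + (1 - 8 / n) ≤ log n := log_add_one_sub_div_le_log (by norm_num) (by linarith)
  have hLpos : 0 < log (n : ℝ) := log_pos (by linarith)
  have hM : log (log n) ≤ log 2 + (log n / 2 - 1) := log_le_log_add_div_sub_one two_pos hLpos
  have hlog8 : log (8 : ℝ) = 3 * log 2 := by
    rw [show (8 : ℝ) = 2 ^ 3 by norm_num, log_pow]
    norm_num
  have hdiv : 15 / (2 * (n : ℝ)) = 15 / 16 * (8 / n) := by
    field_simp
    ring
  linarith [log_two_gt_d9]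

lemma two_mul_sub_one_lt_gain_of_lt_twenty {n : ℕ} (h9 : 9 ≤ n) (h20 : n < 20) :
    2 * (n : ℝ) - 1 < gain n (1 + (log n - log (log n) / 8) / (n : ℝ) ^ 2) := by
  have hn : (9 : ℝ) ≤ n := by exact_mod_cast h9
  have hwitness : 2 * (n : ℝ) - 1 < gain n (1 + (117 / 40 - 15 / (2 * n)) / (n : ℝ) ^ 2) := by
    -- `norm_num` only evaluates powers with exponent at most 256
    rw [gain, sq (n - 1), pow_mul]
    interval_cases n <;> norm_num
  refine hwitness.trans_le (gain_le_gain ?_ ?_ (by linarith))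
  · have h15 : 15 / (2 * (n : ℝ)) ≤ 15 / 18 := by gcongr; linarith
    have := div_nonneg (by linarith : 0 ≤ 117 / 40 - 15 / (2 * (n : ℝ))) (sq_nonneg (n : ℝ))
    linarith
  · gcongr 1 + ?_ / _
    exact le_log_sub_log_log_div_eight (by omega)

lemma sub_sq_le_log_one_add {x : ℝ} (hx : 0 ≤ x) : x - x ^ 2 ≤ log (1 + x) := by
  have h := one_sub_inv_le_log_of_pos (by positivity : 0 < 1 + x)
  have hinv : (1 + x)⁻¹ ≤ 1 - x + x ^ 2 := by
    rw [inv_le_iff_one_le_mul₀ (by positivity)]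
    nlinarith [pow_nonneg hx 3]
  linarith

lemma exp_sub_le_one_add_div_sq_pow {n : ℕ} (hn : 1 ≤ n) {y : ℝ} (hy : 0 ≤ y) :
    exp (y - (2 * y / n + (y / n) ^ 2)) ≤ (1 + y / (n : ℝ) ^ 2) ^ ((n - 1) ^ 2) := by
  have hn' : (1 : ℝ) ≤ n := by exact_mod_cast hn
  have hx : 0 ≤ y / (n : ℝ) ^ 2 := by positivity
  rw [← exp_log (by positivity : 0 < 1 + y / (n : ℝ) ^ 2), ← exp_nat_mul, exp_le_exp]
  refine le_trans ?_ (mul_le_mul_of_nonneg_left (sub_sq_le_log_one_add hx) (by positivity))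
  rw [Nat.cast_pow, Nat.cast_sub hn, Nat.cast_one, ← sub_nonneg]
  field_simp
  nlinarith [mul_nonneg (sq_nonneg y) (by linarith : (0 : ℝ) ≤ 2 * n - 1),
    mul_nonneg hy (sq_nonneg (n : ℝ))]

lemma div_le_one_sub_inv_mul_one_add_pow_sub_one {n : ℕ} (hn : 1 ≤ n) {y : ℝ} (hy : 0 ≤ y) :
    ((n - 1) * (2 * n - 1) * y / (n : ℝ) ^ 2 - 1) / n
      ≤ (1 - 1 / (n : ℝ)) * (1 + y / (n : ℝ) ^ 2) ^ (2 * n - 1) - 1 := by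
  have hn' : (1 : ℝ) ≤ n := by exact_mod_cast hn
  have hx : 0 ≤ y / (n : ℝ) ^ 2 := by positivity
  have hbernoulli := one_add_mul_le_pow (by linarith : (-2 : ℝ) ≤ y / (n : ℝ) ^ 2) (2 * n - 1)
  rw [Nat.cast_sub (by omega), Nat.cast_mul, Nat.cast_ofNat, Nat.cast_one] at hbernoulli
  have hc : 0 ≤ 1 - 1 / (n : ℝ) := by
    rw [sub_nonneg, div_le_one (by linarith)]
    exact hn'
  calc ((n - 1) * (2 * n - 1) * y / (n : ℝ) ^ 2 - 1) / n
      = (1 - 1 / (n : ℝ)) * (1 + (2 * n - 1) * (y / (n : ℝ) ^ 2)) - 1 := by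
        field_simp
        ring
    _ ≤ (1 - 1 / (n : ℝ)) * (1 + y / (n : ℝ) ^ 2) ^ (2 * n - 1) - 1 := by gcongr

lemma exp_mul_le_gain {n : ℕ} (hn : 1 ≤ n) {y : ℝ} (hy : 0 ≤ y)
    (hP : 1 ≤ (n - 1) * (2 * n - 1) * y / (n : ℝ) ^ 2) :
    exp (y - (2 * y / n + (y / n) ^ 2)) * ((n - 1) * (2 * n - 1) * y / (n : ℝ) ^ 2 - 1)
      ≤ gain n (1 + y / (n : ℝ) ^ 2) := by
  have hn' : (0 : ℝ) < n := by exact_mod_cast hn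
  have hsecond := div_le_one_sub_inv_mul_one_add_pow_sub_one hn hy
  calc exp (y - (2 * y / n + (y / n) ^ 2)) * ((n - 1) * (2 * n - 1) * y / (n : ℝ) ^ 2 - 1)
      = n * exp (y - (2 * y / n + (y / n) ^ 2))
          * (((n - 1) * (2 * n - 1) * y / (n : ℝ) ^ 2 - 1) / n) := by
        field_simp
    _ ≤ gain n (1 + y / (n : ℝ) ^ 2) := by
        unfold gain
        gcongr
        exact exp_sub_le_one_add_div_sq_pow hn hy

lemma log_le_three_div_twenty_mul {x : ℝ} (hx : 20 ≤ x) : log x ≤ 3 / 20 * x := by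
  have h20 : log 20 < 3 := by
    rw [log_lt_iff_lt_exp (by norm_num), show (3 : ℝ) = (3 : ℕ) * 1 by norm_num, exp_nat_mul]
    calc (20 : ℝ) < 2.7182818283 ^ 3 := by norm_num
      _ < exp 1 ^ 3 := by gcongr; exact exp_one_gt_d9
  linarith [log_le_log_add_div_sub_one (by norm_num : (0 : ℝ) < 20) (by linarith : 0 < x)]

lemma exp_log_div_eight_le {L : ℝ} (hL : 0 < L) : exp (log L / 8) ≤ (L + 7) / 8 := by
  have h := rpow_one_add_le_one_add_mul_self (by linarith : -1 ≤ L - 1)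
    (by norm_num : (0 : ℝ) ≤ 1 / 8) (by norm_num)
  rw [add_sub_cancel, rpow_def_of_pos hL] at h
  rw [div_eq_mul_one_div (log L)]
  linarith

lemma two_mul_sub_one_lt_gain_of_twenty_le {n : ℕ} (h20 : 20 ≤ n) :
    2 * (n : ℝ) - 1 < gain n (1 + (log n - log (log n) / 8) / (n : ℝ) ^ 2) := by
  have hn : (20 : ℝ) ≤ n := by exact_mod_cast h20
  set L := log (n : ℝ) with hL
  set y := L - log L / 8 with hy
  set s := 2 * y / n + (y / n) ^ 2 with hs
  set P := (n - 1) * (2 * n - 1) * y / (n : ℝ) ^ 2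
  have hL_lb : 2.77 ≤ L := by
    have h16 : log (16 : ℝ) ≤ L := log_le_log (by norm_num) (by linarith)
    rw [show (16 : ℝ) = 2 ^ 4 by norm_num, log_pow, Nat.cast_ofNat] at h16
    linarith [log_two_gt_d9]
  have hM : 0 ≤ log L := log_nonneg (by linarith)
  have hM_le : log L ≤ L - 1 := log_le_sub_one_of_pos (by linarith)
  have hy_lb : (7 * L + 1) / 8 ≤ y := by linarith
  have hyn : y / n ≤ 3 / 20 := by
    rw [div_le_iff₀ (by linarith)]
    linarith [log_le_three_div_twenty_mul hn]
  have hs_le : s ≤ 0.3225 := by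
    rw [hs, mul_div_assoc]
    nlinarith [div_nonneg (by linarith : 0 ≤ y) (by linarith : (0 : ℝ) ≤ n)]
  have hP_lb : 1.85 * y ≤ P := by
    rw [le_div_iff₀ (by positivity)]
    have hquad : (0 : ℝ) ≤ 0.15 * n ^ 2 - 3 * n + 1 := by nlinarith
    nlinarith [mul_nonneg (by linarith : 0 ≤ y) hquad]
  have hexp : exp (y - s) * exp (log L / 8) = n * exp (-s) := by
    rw [← exp_add, show y - s + log L / 8 = L + -s by ring, exp_add, hL, exp_log (by linarith)]
  have hroot := exp_log_div_eight_le (by linarith : 0 < L)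
  have hexp_s : 1 - s ≤ exp (-s) := by linarith [add_one_le_exp (-s)]
  have hmargin : L + 7 ≤ 4 * (1 - s) * (P - 1) := by nlinarith
  have hkey : 2 * n ≤ exp (y - s) * (P - 1) := by
    have hE : n * (1 - s) ≤ exp (y - s) * ((L + 7) / 8) :=
      calc n * (1 - s) ≤ n * exp (-s) := by gcongr
        _ = exp (y - s) * exp (log L / 8) := hexp.symm
        _ ≤ exp (y - s) * ((L + 7) / 8) := by gcongr
    nlinarith [mul_le_mul_of_nonneg_right hE (by linarith : 0 ≤ P - 1)]
  calc 2 * (n : ℝ) - 1 < 2 * n := by linarith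
    _ ≤ exp (y - s) * (P - 1) := hkey
    _ ≤ gain n (1 + y / (n : ℝ) ^ 2) := exp_mul_le_gain (by omega) (by linarith) (by linarith)

theorem nunstar_upper_bound_general (n : ℕ) (hn : 9 ≤ n)
    (ν : ℝ)
    (huniq : ∀ ρ : ℝ, 1 ≤ ρ → munMinus n ρ = 0 → ρ = ν) :
    ν < 1 + Real.log n / (n : ℝ) ^ 2 - Real.log (Real.log n) / (8 * (n : ℝ) ^ 2) := by
  have hn1 : 1 ≤ n := by omega
  have hL : 0 < log (n : ℝ) := log_pos (by exact_mod_cast (by omega : 1 < n))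
  have hy : 0 ≤ log n - log (log n) / 8 := by linarith [log_le_sub_one_of_pos hL]
  have hB : 1 + log n / (n : ℝ) ^ 2 - log (log n) / (8 * (n : ℝ) ^ 2)
      = 1 + (log n - log (log n) / 8) / (n : ℝ) ^ 2 := by ring
  rw [hB]
  refine lt_of_unique_zero_of_nonpos_of_pos (le_add_of_nonneg_right (by positivity))
    (continuous_munMinus n).continuousOn (munMinus_one_neg hn1).le ?_ fun ρ hρ ↦ huniq ρ hρ.1
  rw [munMinus_pos_iff hn1]
  rcases lt_or_ge n 20 with h20 | h20
  · exact two_mul_sub_one_lt_gain_of_lt_twenty hn h20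
  · exact two_mul_sub_one_lt_gain_of_twenty_le h20

/-- **Lemma 3.13, upper bound (3.17).** For `n ≥ 9`, the unique zero `ν_n*` of
`μ_n^−` in `[1, ∞)` satisfies `ν_n* < 1 + (ln n)/n² − ln(ln n)/(8n²)`. -/
theorem nunstar_upper_bound (n : ℕ) (hn : 9 ≤ n)
    (ν : ℝ) (hν1 : 1 ≤ ν) (hν0 : munMinus n ν = 0)
    (huniq : ∀ ρ : ℝ, 1 ≤ ρ → munMinus n ρ = 0 → ρ = ν) :
    ν < 1 + Real.log n / (n : ℝ) ^ 2 - Real.log (Real.log n) / (8 * (n : ℝ) ^ 2) :=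
  nunstar_upper_bound_general n hn ν huniq
end

section
/- Let n ≥ 9 be an integer, define μ_n^−(ρ) = −1 − (n·ρ^{(n−1)²}·(1 − (1 − 1/n)·ρ^{2n−1}))/(2n−1), and let ν_n* be the unique zero of μ_n^− in [1, +∞). Then ν_n* < ((2n−1)/(n−1))^{1/(2n−2)}; equivalently, (ν_n*)^{(n²−n)/2} > ((n−1)/(2n−1))·(ν_n*)^{(n²+3n−4)/2}. -/
/-!
Write `A = ν^((n-1)²)` and `C = ν^(2n-2)`. Clearing denominators, `μ_n^−(ν) = 0` reads
`(n-1)·A·C·ν = (2n-1) + n·A`. If `(n-1)·C ≥ 2n-1`, the left side is at least `(2n-1)·A·ν`,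
which exceeds `(2n-1)·A` since `ν > 1`; hence `(n-1)·A < 2n-1`, contradicting `A ≥ C`
(as `(n-1)² ≥ 2n-2` for `n ≥ 3`). So `ν^(2n-2) < (2n-1)/(n-1)`, which is the first claim,
and the second follows from `(n²+3n-4)/2 = (n²-n)/2 + (2n-2)`.
-/

section

variable {n : ℕ} {ν : ℝ}

theorem munMinus_eq_zero_iff (hn : 1 ≤ n) :
    munMinus n ν = 0 ↔
      ((n : ℝ) - 1) * (ν ^ ((n - 1) ^ 2) * ν ^ (2 * n - 1)) =
        2 * (n : ℝ) - 1 + n * ν ^ ((n - 1) ^ 2) := by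
  have hN : (1 : ℝ) ≤ n := by exact_mod_cast hn
  have h2N : 2 * (n : ℝ) - 1 ≠ 0 := by linarith
  have hcleared : munMinus n ν = (((n : ℝ) - 1) * (ν ^ ((n - 1) ^ 2) * ν ^ (2 * n - 1)) -
      (2 * (n : ℝ) - 1 + n * ν ^ ((n - 1) ^ 2))) / (2 * (n : ℝ) - 1) := by
    have hN0 : (n : ℝ) ≠ 0 := by linarith
    rw [eq_div_iff h2N, munMinus, sub_mul, div_mul_cancel₀ _ h2N]
    field_simp
    ring
  rw [hcleared, div_eq_zero_iff, sub_eq_zero, or_iff_left h2N]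

theorem one_lt_of_munMinus_eq_zero (hn : 1 ≤ n) (hν : 1 ≤ ν) (h : munMinus n ν = 0) : 1 < ν := by
  refine lt_of_le_of_ne hν fun hν1 => ?_
  have hN : (1 : ℝ) ≤ n := by exact_mod_cast hn
  rw [munMinus_eq_zero_iff hn, ← hν1] at h
  simp only [one_pow, mul_one] at h
  linarith

theorem pow_two_mul_sub_two_lt_of_munMinus_eq_zero (hn : 3 ≤ n) (hν : 1 ≤ ν) (h : munMinus n ν = 0) :
    ν ^ (2 * n - 2) < (2 * (n : ℝ) - 1) / ((n : ℝ) - 1) := by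
  have hN : (3 : ℝ) ≤ n := by exact_mod_cast hn
  have hν1 : 1 < ν := one_lt_of_munMinus_eq_zero (by omega) hν h
  rw [munMinus_eq_zero_iff (by omega)] at h
  set A := ν ^ ((n - 1) ^ 2)
  set C := ν ^ (2 * n - 2)
  have hA : 0 < A := by positivity
  have hB : ν ^ (2 * n - 1) = C * ν := by
    rw [← pow_succ]
    congr 1
    omega
  have hCA : C ≤ A := by
    refine pow_le_pow_right₀ hν ?_
    rw [show 2 * n - 2 = 2 * (n - 1) by omega, sq]
    exact Nat.mul_le_mul_right _ (by omega)
  rw [lt_div_iff₀ (by linarith)]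
  by_contra! hC
  have hAν : (2 * (n : ℝ) - 1) * A < (2 * (n : ℝ) - 1) * (A * ν) := by
    gcongr
    · linarith
    · exact lt_mul_of_one_lt_right hA hν1
  have hbound : (2 * (n : ℝ) - 1) * (A * ν) ≤ ((n : ℝ) - 1) * (A * (C * ν)) := by
    calc (2 * (n : ℝ) - 1) * (A * ν) ≤ (C * ((n : ℝ) - 1)) * (A * ν) := by gcongr
      _ = ((n : ℝ) - 1) * (A * (C * ν)) := by ring
  have hA_small : ((n : ℝ) - 1) * A < 2 * (n : ℝ) - 1 := by
    rw [hB] at h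
    linarith
  have hCA' : ((n : ℝ) - 1) * C ≤ ((n : ℝ) - 1) * A := by gcongr; linarith
  linarith

end

theorem sq_add_three_mul_sub_four_div_two (n : ℕ) :
    (n ^ 2 + 3 * n - 4) / 2 = (n ^ 2 - n) / 2 + (2 * n - 2) := by
  rcases Nat.eq_zero_or_pos n with rfl | hn
  · rfl
  have hsq : n ≤ n ^ 2 := Nat.le_self_pow two_ne_zero n
  rw [show n ^ 2 + 3 * n - 4 = (n ^ 2 - n) + (2 * n - 2) * 2 by omega,
    Nat.add_mul_div_right _ _ two_pos]

theorem nunstar_dominant_term_general (n : ℕ) (hn : 9 ≤ n)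
    (ν : ℝ) (hν1 : 1 ≤ ν) (hν0 : munMinus n ν = 0) :
    ν < ((2 * (n : ℝ) - 1) / ((n : ℝ) - 1)) ^ ((1 : ℝ) / (2 * (n : ℝ) - 2)) ∧
      (((n : ℝ) - 1) / (2 * (n : ℝ) - 1)) * ν ^ ((n ^ 2 + 3 * n - 4) / 2) <
        ν ^ ((n ^ 2 - n) / 2) := by
  have hN : (9 : ℝ) ≤ n := by exact_mod_cast hn
  have hkey := pow_two_mul_sub_two_lt_of_munMinus_eq_zero (by omega) hν1 hν0
  constructor
  · have hexp : ((2 * n - 2 : ℕ) : ℝ) = 2 * (n : ℝ) - 2 := by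
      push_cast [Nat.cast_sub (by omega : 2 ≤ 2 * n)]
      ring
    rwa [one_div, Real.lt_rpow_inv_iff_of_pos (by linarith)
      (div_nonneg (by linarith) (by linarith)) (by linarith), ← hexp, Real.rpow_natCast]
  · rw [sq_add_three_mul_sub_four_div_two, pow_add, mul_comm (ν ^ _), ← mul_assoc]
    have hfactor : ((n : ℝ) - 1) / (2 * (n : ℝ) - 1) * ν ^ (2 * n - 2) < 1 := by
      rw [div_mul_eq_mul_div, div_lt_one (by linarith), mul_comm]
      rwa [lt_div_iff₀ (by linarith)] at hkey
    exact mul_lt_of_lt_one_left (by positivity) hfactor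

/-- **Lemma 3.17.** For `n ≥ 9`, the unique zero `ν_n*` of `μ_n^−` in `[1, ∞)`
satisfies `ν_n* < ((2n−1)/(n−1))^{1/(2n−2)}`; equivalently,
`(ν_n*)^{(n²−n)/2} > ((n−1)/(2n−1))·(ν_n*)^{(n²+3n−4)/2}`. -/
theorem nunstar_dominant_term (n : ℕ) (hn : 9 ≤ n)
    (ν : ℝ) (hν1 : 1 ≤ ν) (hν0 : munMinus n ν = 0)
    (huniq : ∀ ρ : ℝ, 1 ≤ ρ → munMinus n ρ = 0 → ρ = ν) :
    ν < ((2 * (n : ℝ) - 1) / ((n : ℝ) - 1)) ^ ((1 : ℝ) / (2 * (n : ℝ) - 2)) ∧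
      (((n : ℝ) - 1) / (2 * (n : ℝ) - 1)) * ν ^ ((n ^ 2 + 3 * n - 4) / 2) <
        ν ^ ((n ^ 2 - n) / 2) :=
  nunstar_dominant_term_general n hn ν hν1 hν0
end
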